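/- arXiv:2411.03227 — 4 statements merged into one kernel-verified Lean document; each statement's English description precedes it below -/
import Mathlib

section
/- Let A ∈ ℝ^{n×n} be a symmetric matrix and α > 0. Let V ∈ ℝ^{n×d} be a matrix with orthonormal columns, each of which is an eigenvector of A whose associated eigenvalue has magnitude at least α (i.e., AV = VΛ with Λ diagonal and |Λ_{jj}| ≥ α for all j). Then for every row index i, ‖V_i‖² ≤ ‖A_i‖²/α², where V_i and A_i denote the i-th rows of V and A respectively and ‖·‖ is the Euclidean norm. -/
open Matrix

/-- incoherence bound for eigenvectors with large eigenvalues. -/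
theorem stmt0 {n d : ℕ} (A : Matrix (Fin n) (Fin n) ℝ) (hA : A.IsSymm)
    (α : ℝ) (hα : 0 < α)
    (V : Matrix (Fin n) (Fin d) ℝ) (hV : Vᵀ * V = 1)
    (Λ : Fin d → ℝ) (hAV : A * V = V * Matrix.diagonal Λ)
    (hΛ : ∀ j, α ≤ |Λ j|) :
    ∀ i, (∑ j, V i j ^ 2) ≤ (∑ j, A i j ^ 2) / α ^ 2 := by
  intro i
  classical
  set x : Fin n → ℝ := fun k => A i k with hx
  set y : Fin d → ℝ := x ᵥ* V with hy
  -- y j = Λ j * V i j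
  have hyj : ∀ j, y j = Λ j * V i j := by
    intro j
    have h := congrFun (congrFun hAV i) j
    rw [Matrix.mul_diagonal] at h
    simpa [hy, Matrix.vecMul, dotProduct, Matrix.mul_apply, hx, mul_comm] using h
  set w : Fin n → ℝ := V *ᵥ y with hw
  have hS : y ⬝ᵥ y = x ⬝ᵥ w := by
    rw [hw, Matrix.dotProduct_mulVec, hy]
  have hww : w ⬝ᵥ w = y ⬝ᵥ y := by
    calc w ⬝ᵥ w = (V *ᵥ y) ᵥ* V ⬝ᵥ y := by rw [← Matrix.dotProduct_mulVec, hw]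
    _ = y ⬝ᵥ y := by
        rw [show (V *ᵥ y) ᵥ* V = Vᵀ *ᵥ (V *ᵥ y) from (Matrix.mulVec_transpose V _).symm,
          Matrix.mulVec_mulVec, hV, Matrix.one_mulVec]
  -- Cauchy-Schwarz: (x ⬝ᵥ w)^2 ≤ (x ⬝ᵥ x) * (w ⬝ᵥ w)
  have hcs : (x ⬝ᵥ w) ^ 2 ≤ (x ⬝ᵥ x) * (w ⬝ᵥ w) := by
    simpa [dotProduct, sq] using
      Finset.sum_mul_sq_le_sq_mul_sq Finset.univ x w
  have hSnn : 0 ≤ y ⬝ᵥ y := by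
    simp only [dotProduct]
    exact Finset.sum_nonneg fun j _ => mul_self_nonneg _
  have hkey : y ⬝ᵥ y ≤ x ⬝ᵥ x := by
    rcases eq_or_lt_of_le hSnn with h0 | hpos
    · rw [← h0]
      simp only [dotProduct]
      exact Finset.sum_nonneg fun k _ => mul_self_nonneg _
    · have h2 : (y ⬝ᵥ y) ^ 2 ≤ (x ⬝ᵥ x) * (y ⬝ᵥ y) := by
        calc (y ⬝ᵥ y) ^ 2 = (x ⬝ᵥ w) ^ 2 := by rw [hS]
        _ ≤ (x ⬝ᵥ x) * (w ⬝ᵥ w) := hcs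
        _ = (x ⬝ᵥ x) * (y ⬝ᵥ y) := by rw [hww]
      nlinarith
  -- α² * ∑ V i j ^ 2 ≤ y ⬝ᵥ y
  have hαb : α ^ 2 * (∑ j, V i j ^ 2) ≤ y ⬝ᵥ y := by
    simp only [dotProduct, Finset.mul_sum]
    apply Finset.sum_le_sum
    intro j _
    have := hΛ j
    have h2 : α ^ 2 ≤ (Λ j) ^ 2 := by
      have := sq_abs (Λ j)
      nlinarith [abs_nonneg (Λ j)]
    rw [hyj j]
    nlinarith [sq_nonneg (V i j)]
  have hxx : x ⬝ᵥ x = ∑ j, A i j ^ 2 := by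
    simp [dotProduct, hx, sq]
  rw [le_div_iff₀ (by positivity : (0:ℝ) < α ^ 2)]
  calc (∑ j, V i j ^ 2) * α ^ 2 = α ^ 2 * (∑ j, V i j ^ 2) := by ring
  _ ≤ y ⬝ᵥ y := hαb
  _ ≤ x ⬝ᵥ x := hkey
  _ = ∑ j, A i j ^ 2 := hxx
end

section
/- Let A ∈ ℝ^{n×p} and B ∈ ℝ^{n×q} be real matrices and let S ∈ ℝ^{k×n} be a (1±ε)-distortion subspace embedding for the concatenated matrix [A|B] ∈ ℝ^{n×(p+q)}. Then ‖AᵀSᵀSB − AᵀB‖ ≤ ε‖A‖‖B‖, where ‖·‖ denotes the operator (spectral) norm. -/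
open Matrix

/-- Operator (spectral) norm of a real matrix, via the induced Euclidean operator norm. -/
noncomputable def opNorm {m n : ℕ} (A : Matrix (Fin m) (Fin n) ℝ) : ℝ :=
  ‖LinearMap.toContinuousLinearMap (Matrix.toEuclideanLin A)‖

private lemma teLin_mul {a b c : ℕ} (M : Matrix (Fin a) (Fin b) ℝ)
    (N : Matrix (Fin b) (Fin c) ℝ) (v : EuclideanSpace ℝ (Fin c)) :
    Matrix.toEuclideanLin (M * N) v = Matrix.toEuclideanLin M (Matrix.toEuclideanLin N v) := by
  simp [Matrix.toEuclideanLin_apply, Matrix.mulVec_mulVec]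

private lemma teLin_transpose {a b : ℕ} (M : Matrix (Fin a) (Fin b) ℝ) :
    Matrix.toEuclideanLin Mᵀ = LinearMap.adjoint (Matrix.toEuclideanLin M) := by
  rw [← Matrix.conjTranspose_eq_transpose_of_trivial]
  exact Matrix.toEuclideanLin_conjTranspose_eq_adjoint M

private lemma real_polarization {E : Type*} [NormedAddCommGroup E] [InnerProductSpace ℝ E]
    (x y : E) : inner ℝ x y = (‖x + y‖ ^ 2 - ‖x - y‖ ^ 2) / (4 : ℝ) := by
  have h1 := norm_add_sq_real x y
  have h2 := norm_sub_sq_real x y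
  linarith

set_option maxHeartbeats 1000000 in
/-- a subspace embedding for `[A|B]` yields approximate matrix products. -/
theorem stmt1 {n p q k : ℕ} (A : Matrix (Fin n) (Fin p) ℝ) (B : Matrix (Fin n) (Fin q) ℝ)
    (S : Matrix (Fin k) (Fin n) ℝ) (ε : ℝ) (hε : 0 ≤ ε)
    (hS : ∀ v : EuclideanSpace ℝ (Fin p ⊕ Fin q),
      (1 - ε) * ‖Matrix.toEuclideanLin (Matrix.fromCols A B) v‖ ^ 2 ≤
          ‖Matrix.toEuclideanLin (S * Matrix.fromCols A B) v‖ ^ 2 ∧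
        ‖Matrix.toEuclideanLin (S * Matrix.fromCols A B) v‖ ^ 2 ≤
          (1 + ε) * ‖Matrix.toEuclideanLin (Matrix.fromCols A B) v‖ ^ 2) :
    opNorm (Aᵀ * Sᵀ * S * B - Aᵀ * B) ≤ ε * opNorm A * opNorm B := by
  set g := Matrix.toEuclideanLin (Matrix.fromCols A B) with hg
  set f := Matrix.toEuclideanLin (S * Matrix.fromCols A B) with hf
  -- one-sided distortion bound
  have hdist : ∀ v, |‖f v‖ ^ 2 - ‖g v‖ ^ 2| ≤ ε * ‖g v‖ ^ 2 := by
    intro v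
    obtain ⟨h1, h2⟩ := hS v
    rw [abs_le]
    constructor <;> nlinarith [sq_nonneg ‖g v‖]
  -- the bilinear error bound (additive form)
  have hD : ∀ w₁ w₂ : EuclideanSpace ℝ (Fin p ⊕ Fin q),
      |inner ℝ (f w₁) (f w₂) - (inner ℝ (g w₁) (g w₂) : ℝ)| ≤
        ε * (‖g w₁‖ ^ 2 + ‖g w₂‖ ^ 2) / 2 := by
    intro w₁ w₂
    have e1 : (inner ℝ (f w₁) (f w₂) : ℝ) = (‖f (w₁ + w₂)‖ ^ 2 - ‖f (w₁ - w₂)‖ ^ 2) / 4 := by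
      rw [real_polarization, ← map_add, ← map_sub]
    have e2 : (inner ℝ (g w₁) (g w₂) : ℝ) = (‖g (w₁ + w₂)‖ ^ 2 - ‖g (w₁ - w₂)‖ ^ 2) / 4 := by
      rw [real_polarization, ← map_add, ← map_sub]
    have hpar : ‖g (w₁ + w₂)‖ * ‖g (w₁ + w₂)‖ + ‖g (w₁ - w₂)‖ * ‖g (w₁ - w₂)‖ =
        2 * (‖g w₁‖ * ‖g w₁‖ + ‖g w₂‖ * ‖g w₂‖) := by
      rw [map_add, map_sub]
      have := parallelogram_law_with_norm ℝ (g w₁) (g w₂)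
      simpa only [pow_two] using this
    have hpar2 : ‖g (w₁ + w₂)‖ ^ 2 + ‖g (w₁ - w₂)‖ ^ 2 =
        2 * (‖g w₁‖ ^ 2 + ‖g w₂‖ ^ 2) := by
      rw [pow_two, pow_two, pow_two, pow_two]; linarith
    have hparε : ε * ‖g (w₁ + w₂)‖ ^ 2 + ε * ‖g (w₁ - w₂)‖ ^ 2 =
        2 * ε * ‖g w₁‖ ^ 2 + 2 * ε * ‖g w₂‖ ^ 2 := by
      linear_combination ε * hpar2
    have h1 := abs_le.mp (hdist (w₁ + w₂))
    have h2 := abs_le.mp (hdist (w₁ - w₂))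
    rw [e1, e2, abs_le]
    constructor <;> [linarith [h1.1, h2.2]; linarith [h1.2, h2.1]]
  -- scaled version
  have hDs : ∀ w₁ w₂ : EuclideanSpace ℝ (Fin p ⊕ Fin q),
      |inner ℝ (f w₁) (f w₂) - (inner ℝ (g w₁) (g w₂) : ℝ)| ≤ ε * ‖g w₁‖ * ‖g w₂‖ := by
    intro w₁ w₂
    by_cases h1 : ‖g w₁‖ = 0
    · have hf1 : ‖f w₁‖ = 0 := by
        have := (hS w₁).2
        rw [h1] at this
        nlinarith [norm_nonneg (f w₁), sq_nonneg ‖f w₁‖]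
      have : f w₁ = 0 := norm_eq_zero.mp hf1
      have hg1 : g w₁ = 0 := norm_eq_zero.mp h1
      simp [this, hg1, h1]
    · by_cases h2 : ‖g w₂‖ = 0
      · have hf2 : ‖f w₂‖ = 0 := by
          have := (hS w₂).2
          rw [h2] at this
          nlinarith [norm_nonneg (f w₂), sq_nonneg ‖f w₂‖]
        have : f w₂ = 0 := norm_eq_zero.mp hf2
        have hg2 : g w₂ = 0 := norm_eq_zero.mp h2
        simp [this, hg2, h2]
      · have h1' : 0 < ‖g w₁‖ := lt_of_le_of_ne (norm_nonneg _) (Ne.symm h1)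
        have h2' : 0 < ‖g w₂‖ := lt_of_le_of_ne (norm_nonneg _) (Ne.symm h2)
        set c : ℝ := Real.sqrt (‖g w₂‖ / ‖g w₁‖) with hc
        have hcpos : 0 < c := Real.sqrt_pos.mpr (div_pos h2' h1')
        have hcsq : c ^ 2 = ‖g w₂‖ / ‖g w₁‖ := Real.sq_sqrt (le_of_lt (div_pos h2' h1'))
        have key := hD (c • w₁) (c⁻¹ • w₂)
        have hfs : ∀ (t : ℝ) w, f (t • w) = t • f w := fun t w => map_smul f t w
        have hgs : ∀ (t : ℝ) w, g (t • w) = t • g w := fun t w => map_smul g t w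
        rw [hfs, hfs, hgs, hgs, real_inner_smul_left, real_inner_smul_right,
          real_inner_smul_left, real_inner_smul_right, norm_smul, norm_smul] at key
        have hcc : c * (c⁻¹ : ℝ) = 1 := mul_inv_cancel₀ (ne_of_gt hcpos)
        rw [show ∀ a b : ℝ, c * (c⁻¹ * a) - c * (c⁻¹ * b) = (c * c⁻¹) * (a - b) by intros; ring,
          hcc, one_mul] at key
        have hnc : ‖c‖ = c := Real.norm_of_nonneg (le_of_lt hcpos)
        have hnci : ‖(c⁻¹ : ℝ)‖ = c⁻¹ := Real.norm_of_nonneg (by positivity)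
        rw [hnc, hnci] at key
        have heq : ε * ((c * ‖g w₁‖) ^ 2 + (c⁻¹ * ‖g w₂‖) ^ 2) / 2 = ε * ‖g w₁‖ * ‖g w₂‖ := by
          have h1 : (c * ‖g w₁‖) ^ 2 = ‖g w₂‖ * ‖g w₁‖ := by
            rw [mul_pow, hcsq]; field_simp
          have h2 : (c⁻¹ * ‖g w₂‖) ^ 2 = ‖g w₂‖ ^ 2 / (‖g w₂‖ / ‖g w₁‖) := by
            rw [mul_pow, ← hcsq]; field_simp
          rw [h1, h2]
          field_simp
          ring
        rw [heq] at key
        exact key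
  -- identify the inner product with matrix entries
  set iA : EuclideanSpace ℝ (Fin p) → EuclideanSpace ℝ (Fin p ⊕ Fin q) :=
    fun x => (WithLp.equiv 2 _).symm (Sum.elim ((WithLp.equiv 2 _) x) 0) with hiA
  set iB : EuclideanSpace ℝ (Fin q) → EuclideanSpace ℝ (Fin p ⊕ Fin q) :=
    fun y => (WithLp.equiv 2 _).symm (Sum.elim 0 ((WithLp.equiv 2 _) y)) with hiB
  have hgA : ∀ x, g (iA x) = Matrix.toEuclideanLin A x := by
    intro x
    simp [hg, hiA, Matrix.toEuclideanLin_apply]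
  have hgB : ∀ y, g (iB y) = Matrix.toEuclideanLin B y := by
    intro y
    simp [hg, hiB, Matrix.toEuclideanLin_apply]
  have hfA : ∀ x, f (iA x) = Matrix.toEuclideanLin (S * A) x := by
    intro x
    simp [hf, hiA, Matrix.toEuclideanLin_apply, ← Matrix.mulVec_mulVec]
  have hfB : ∀ y, f (iB y) = Matrix.toEuclideanLin (S * B) y := by
    intro y
    simp [hf, hiB, Matrix.toEuclideanLin_apply, ← Matrix.mulVec_mulVec]
  set M := Aᵀ * Sᵀ * S * B - Aᵀ * B with hM
  have hinner : ∀ (x : EuclideanSpace ℝ (Fin p)) (y : EuclideanSpace ℝ (Fin q)),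
      (inner ℝ x (Matrix.toEuclideanLin M y) : ℝ) =
        inner ℝ (f (iA x)) (f (iB y)) - inner ℝ (g (iA x)) (g (iB y)) := by
    intro x y
    rw [hfA, hfB, hgA, hgB]
    have e1 : Aᵀ * Sᵀ * S * B = (S * A)ᵀ * (S * B) := by
      rw [Matrix.transpose_mul, Matrix.mul_assoc]
    rw [hM, map_sub, LinearMap.sub_apply, inner_sub_right, e1]
    congr 1
    · rw [teLin_mul, teLin_transpose, LinearMap.adjoint_inner_right]
    · rw [teLin_mul, teLin_transpose, LinearMap.adjoint_inner_right]
  -- operator norm bounds for A and B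
  have hAle : ∀ x : EuclideanSpace ℝ (Fin p),
      ‖Matrix.toEuclideanLin A x‖ ≤ opNorm A * ‖x‖ := fun x =>
    (LinearMap.toContinuousLinearMap (Matrix.toEuclideanLin A)).le_opNorm x
  have hBle : ∀ y : EuclideanSpace ℝ (Fin q),
      ‖Matrix.toEuclideanLin B y‖ ≤ opNorm B * ‖y‖ := fun y =>
    (LinearMap.toContinuousLinearMap (Matrix.toEuclideanLin B)).le_opNorm y
  have hOA : 0 ≤ opNorm A := norm_nonneg _
  have hOB : 0 ≤ opNorm B := norm_nonneg _
  -- final: operator norm bound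
  rw [opNorm]
  apply ContinuousLinearMap.opNorm_le_bound _ (by positivity)
  intro y
  set z := Matrix.toEuclideanLin M y with hz
  have hzz : (LinearMap.toContinuousLinearMap (Matrix.toEuclideanLin M)) y = z := rfl
  rw [hzz]
  have key : ‖z‖ ^ 2 ≤ ε * (opNorm A * ‖z‖) * (opNorm B * ‖y‖) := by
    have h1 : ‖z‖ ^ 2 = (inner ℝ z z : ℝ) := (real_inner_self_eq_norm_sq z).symm
    rw [h1, hinner z y]
    calc (inner ℝ (f (iA z)) (f (iB y)) : ℝ) - inner ℝ (g (iA z)) (g (iB y))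
        ≤ ε * ‖g (iA z)‖ * ‖g (iB y)‖ := le_trans (le_abs_self _) (hDs _ _)
      _ ≤ ε * (opNorm A * ‖z‖) * (opNorm B * ‖y‖) := by
          rw [hgA, hgB]
          exact mul_le_mul (mul_le_mul_of_nonneg_left (hAle z) hε) (hBle y)
            (norm_nonneg _) (by positivity)
  by_cases hz0 : ‖z‖ = 0
  · rw [hz0]; positivity
  · have hz0' : 0 < ‖z‖ := lt_of_le_of_ne (norm_nonneg _) (Ne.symm hz0)
    nlinarith
end

section
/- Let U ∈ ℝ^{n×p} and Π ∈ ℝ^{n×d} be such that the concatenated matrix [U|Π] has orthonormal columns, let M ∈ ℝ^{k×k} be symmetric, and suppose S ∈ ℝ^{k×n} is a (1±α)-distortion subspace embedding for [U|Π] with 0 < α ≤ 1/7. Let P be the orthogonal projection onto the column space of SU and let P⊥ = I − P. Then for every nonzero x ∈ ℝ^d, P⊥SΠx ≠ 0 and |((P⊥SΠx)ᵀM(P⊥SΠx))/‖P⊥SΠx‖² − ((SΠx)ᵀM(SΠx))/‖SΠx‖²| ≤ 10α‖M‖. -/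
open Matrix
open scoped InnerProductSpace

variable {ι κ τ : Type*} [Fintype ι] [Fintype κ] [Fintype τ]
  [DecidableEq ι] [DecidableEq κ] [DecidableEq τ]

lemma real_pol {E : Type*} [NormedAddCommGroup E] [InnerProductSpace ℝ E] (x y : E) :
    ⟪x, y⟫_ℝ = (‖x + y‖ ^ 2 - ‖x - y‖ ^ 2) / 4 := by
  have h1 := norm_add_sq_real x y
  have h2 := norm_sub_sq_real x y
  linarith

lemma teLin_mul_s6 (A : Matrix ι κ ℝ) (B : Matrix κ τ ℝ)
    (v : EuclideanSpace ℝ τ) :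
    Matrix.toEuclideanLin (A * B) v = Matrix.toEuclideanLin A (Matrix.toEuclideanLin B v) := by
  simp [Matrix.toEuclideanLin_apply, Matrix.mulVec_mulVec]

lemma teLin_adj (A : Matrix ι κ ℝ) (u : EuclideanSpace ℝ ι)
    (v : EuclideanSpace ℝ κ) :
    ⟪u, Matrix.toEuclideanLin A v⟫_ℝ = ⟪Matrix.toEuclideanLin Aᵀ u, v⟫_ℝ := by
  have h := Matrix.toEuclideanLin_conjTranspose_eq_adjoint A
  rw [show Aᴴ = Aᵀ from rfl] at h
  rw [h]
  exact (LinearMap.adjoint_inner_left _ _ _).symm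

lemma teLin_norm (A : Matrix ι κ ℝ) (h : Aᵀ * A = 1)
    (v : EuclideanSpace ℝ κ) :
    ‖Matrix.toEuclideanLin A v‖ ^ 2 = ‖v‖ ^ 2 := by
  have h1 : ⟪Matrix.toEuclideanLin A v, Matrix.toEuclideanLin A v⟫_ℝ = ⟪v, v⟫_ℝ := by
    rw [teLin_adj, ← teLin_mul_s6, h]
    simp [Matrix.toEuclideanLin_apply]
  rw [← real_inner_self_eq_norm_sq, ← real_inner_self_eq_norm_sq, h1]

lemma teLin_opNorm {a b : ℕ} (A : Matrix (Fin a) (Fin b) ℝ) (u : EuclideanSpace ℝ (Fin a))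
    (v : EuclideanSpace ℝ (Fin b)) :
    |⟪u, Matrix.toEuclideanLin A v⟫_ℝ| ≤ opNorm A * ‖u‖ * ‖v‖ := by
  have h1 : |⟪u, Matrix.toEuclideanLin A v⟫_ℝ| ≤ ‖u‖ * ‖Matrix.toEuclideanLin A v‖ :=
    abs_real_inner_le_norm _ _
  have h2 : ‖Matrix.toEuclideanLin A v‖ ≤ opNorm A * ‖v‖ := by
    have := (LinearMap.toContinuousLinearMap (Matrix.toEuclideanLin A)).le_opNorm v
    simpa [opNorm] using this
  calc |⟪u, Matrix.toEuclideanLin A v⟫_ℝ| ≤ ‖u‖ * ‖Matrix.toEuclideanLin A v‖ := h1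
    _ ≤ ‖u‖ * (opNorm A * ‖v‖) := by
        exact mul_le_mul_of_nonneg_left h2 (norm_nonneg _)
    _ = opNorm A * ‖u‖ * ‖v‖ := by ring

noncomputable def el {p d : ℕ} (y : EuclideanSpace ℝ (Fin p)) (x : EuclideanSpace ℝ (Fin d)) :
    EuclideanSpace ℝ (Fin p ⊕ Fin d) :=
  (WithLp.equiv 2 _).symm (Sum.elim (WithLp.equiv 2 _ y) (WithLp.equiv 2 _ x))

lemma el_inner {p d : ℕ} (y y' : EuclideanSpace ℝ (Fin p)) (x x' : EuclideanSpace ℝ (Fin d)) :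
    ⟪el y x, el y' x'⟫_ℝ = ⟪y, y'⟫_ℝ + ⟪x, x'⟫_ℝ := by
  simp [el, PiLp.inner_apply, Fintype.sum_sum_type, WithLp.equiv, RCLike.inner_apply,
    Sum.elim_inl, Sum.elim_inr, Equiv.refl_apply]

lemma el_norm {p d : ℕ} (y : EuclideanSpace ℝ (Fin p)) (x : EuclideanSpace ℝ (Fin d)) :
    ‖el y x‖ ^ 2 = ‖y‖ ^ 2 + ‖x‖ ^ 2 := by
  rw [← real_inner_self_eq_norm_sq, ← real_inner_self_eq_norm_sq, ← real_inner_self_eq_norm_sq,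
    el_inner]

lemma el_mulVec {n p d : ℕ} (U : Matrix (Fin n) (Fin p) ℝ) (Pm : Matrix (Fin n) (Fin d) ℝ)
    (y : EuclideanSpace ℝ (Fin p)) (x : EuclideanSpace ℝ (Fin d)) :
    Matrix.toEuclideanLin (Matrix.fromCols U Pm) (el y x) =
      Matrix.toEuclideanLin U y + Matrix.toEuclideanLin Pm x := by
  simp [el, Matrix.toEuclideanLin_apply, Matrix.fromCols_mulVec_sumElim]

set_option maxHeartbeats 4000000 in
/-- projecting `SΠx` away from the column space of `SU` changes the
Rayleigh quotient of a symmetric matrix `M` by at most `10α‖M‖`. -/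
theorem stmt6 {n p d k : ℕ} (U : Matrix (Fin n) (Fin p) ℝ) (Pm : Matrix (Fin n) (Fin d) ℝ)
    (horth : (Matrix.fromCols U Pm)ᵀ * Matrix.fromCols U Pm = 1)
    (M : Matrix (Fin k) (Fin k) ℝ) (hM : M.IsSymm)
    (S : Matrix (Fin k) (Fin n) ℝ) (α : ℝ) (hα0 : 0 < α) (hα : α ≤ 1 / 7)
    (hS : ∀ v : EuclideanSpace ℝ (Fin p ⊕ Fin d),
      (1 - α) * ‖Matrix.toEuclideanLin (Matrix.fromCols U Pm) v‖ ^ 2 ≤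
          ‖Matrix.toEuclideanLin (S * Matrix.fromCols U Pm) v‖ ^ 2 ∧
        ‖Matrix.toEuclideanLin (S * Matrix.fromCols U Pm) v‖ ^ 2 ≤
          (1 + α) * ‖Matrix.toEuclideanLin (Matrix.fromCols U Pm) v‖ ^ 2) :
    ∀ x : EuclideanSpace ℝ (Fin d), x ≠ 0 →
      let w : EuclideanSpace ℝ (Fin k) := Matrix.toEuclideanLin (S * Pm) x
      let z : EuclideanSpace ℝ (Fin k) :=
        w - (Submodule.orthogonalProjectionOnto (LinearMap.range (Matrix.toEuclideanLin (S * U))) w :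
          EuclideanSpace ℝ (Fin k))
      z ≠ 0 ∧
        |⟪z, Matrix.toEuclideanLin M z⟫_ℝ / ‖z‖ ^ 2 -
            ⟪w, Matrix.toEuclideanLin M w⟫_ℝ / ‖w‖ ^ 2| ≤ 10 * α * opNorm M := by
  intro x hx
  set A := Matrix.fromCols U Pm with hA
  set K := LinearMap.range (Matrix.toEuclideanLin (S * U)) with hK
  intro w z
  set u : EuclideanSpace ℝ (Fin k) := (Submodule.orthogonalProjectionOnto K w : EuclideanSpace ℝ (Fin k))
    with hu
  have hzwu : z = w - u := rfl
  have hwzu : w = z + u := by rw [hzwu]; abel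
  -- distortion simplification
  have hnA : ∀ v : EuclideanSpace ℝ (Fin p ⊕ Fin d),
      ‖Matrix.toEuclideanLin A v‖ ^ 2 = ‖v‖ ^ 2 := teLin_norm A horth
  have hSl : ∀ v : EuclideanSpace ℝ (Fin p ⊕ Fin d),
      (1 - α) * ‖v‖ ^ 2 ≤ ‖Matrix.toEuclideanLin (S * A) v‖ ^ 2 := by
    intro v; have := (hS v).1; rwa [hnA] at this
  have hSr : ∀ v : EuclideanSpace ℝ (Fin p ⊕ Fin d),
      ‖Matrix.toEuclideanLin (S * A) v‖ ^ 2 ≤ (1 + α) * ‖v‖ ^ 2 := by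
    intro v; have := (hS v).2; rwa [hnA] at this
  -- polarization bound
  have hpol : ∀ a b : EuclideanSpace ℝ (Fin p ⊕ Fin d),
      ⟪Matrix.toEuclideanLin (S * A) a, Matrix.toEuclideanLin (S * A) b⟫_ℝ ≤
        ⟪a, b⟫_ℝ + α / 2 * (‖a‖ ^ 2 + ‖b‖ ^ 2) := by
    intro a b
    have e1 : ⟪Matrix.toEuclideanLin (S * A) a, Matrix.toEuclideanLin (S * A) b⟫_ℝ =
        (‖Matrix.toEuclideanLin (S * A) (a + b)‖ ^ 2 -
          ‖Matrix.toEuclideanLin (S * A) (a - b)‖ ^ 2) / 4 := by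
      rw [map_add, map_sub]
      exact real_pol _ _
    have e2 : ⟪a, b⟫_ℝ = (‖a + b‖ ^ 2 - ‖a - b‖ ^ 2) / 4 :=
      real_pol _ _
    have e3 : ‖a + b‖ ^ 2 + ‖a - b‖ ^ 2 = 2 * ‖a‖ ^ 2 + 2 * ‖b‖ ^ 2 := by
      have := norm_add_sq_real a b
      have := norm_sub_sq_real a b
      linarith
    have h1 := hSr (a + b)
    have h2 := hSl (a - b)
    have e4 : α * (‖a + b‖ ^ 2 + ‖a - b‖ ^ 2) = α * (2 * ‖a‖ ^ 2 + 2 * ‖b‖ ^ 2) := by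
      rw [e3]
    rw [e1, e2]
    ring_nf
    ring_nf at h1 h2 e4 ⊢
    linarith
  -- w as image
  have hwe : w = Matrix.toEuclideanLin (S * A) (el 0 x) := by
    show Matrix.toEuclideanLin (S * Pm) x = _
    rw [teLin_mul_s6, teLin_mul_s6, hA, el_mulVec, map_zero, zero_add]
  have htx : (0:ℝ) < ‖x‖ ^ 2 := by have : ‖x‖ ≠ 0 := norm_ne_zero_iff.mpr hx; positivity
  -- w lower bound
  have hw2 : (1 - α) * ‖x‖ ^ 2 ≤ ‖w‖ ^ 2 := by
    have h := hSl (el (0 : EuclideanSpace ℝ (Fin p)) x)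
    rw [← hwe] at h
    rw [el_norm] at h
    simpa using h
  -- u is in the range of S*U
  have humem : u ∈ K := (Submodule.orthogonalProjectionOnto K w).2
  rw [hK, LinearMap.mem_range] at humem
  obtain ⟨y, hy⟩ := humem
  have hzu_inner : ⟪z, u⟫_ℝ = 0 := by
    have h := Submodule.starProjection_inner_eq_zero w u ((Submodule.orthogonalProjectionOnto K w).2)
    exact h
  have pyth : ‖w‖ ^ 2 = ‖z‖ ^ 2 + ‖u‖ ^ 2 := by
    have h := norm_add_sq_real z u
    rw [← hwzu] at h
    rw [h, hzu_inner]; ring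
  have huw : ⟪u, w⟫_ℝ = ‖u‖ ^ 2 := by
    have h0 : ⟪u, z⟫_ℝ = 0 := by rw [real_inner_comm]; exact hzu_inner
    rw [hwzu, inner_add_right, h0, real_inner_self_eq_norm_sq]
    ring
  have hue : Matrix.toEuclideanLin (S * A) (el y 0) = u := by
    rw [teLin_mul_s6, hA, el_mulVec, map_zero, add_zero, ← teLin_mul_s6, hy]
  have hze : z = Matrix.toEuclideanLin (S * A) (el (-y) x) := by
    rw [hzwu, teLin_mul_s6, hA, el_mulVec, map_neg, map_add, map_neg,
      ← teLin_mul_s6, ← teLin_mul_s6, hy]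
    show w - u = -u + Matrix.toEuclideanLin (S * Pm) x
    show w - u = -u + w
    abel
  have hz2 : (1 - α) * (‖y‖ ^ 2 + ‖x‖ ^ 2) ≤ ‖z‖ ^ 2 := by
    have h := hSl (el (-y) x)
    rw [← hze, el_norm, norm_neg] at h
    exact h
  have hy2 : (1 - α) * ‖y‖ ^ 2 ≤ ‖u‖ ^ 2 := by
    have h := hSl (el y (0 : EuclideanSpace ℝ (Fin d)))
    rw [hue, el_norm] at h
    simpa using h
  have h1a : (0:ℝ) < 1 - α := by linarith
  have hz2' : (1 - α) * ‖x‖ ^ 2 ≤ ‖z‖ ^ 2 := by nlinarith [sq_nonneg ‖y‖]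
  have hzpos : (0:ℝ) < ‖z‖ ^ 2 := lt_of_lt_of_le (mul_pos h1a htx) hz2'
  have hz0 : z ≠ 0 := by
    intro h
    rw [h, norm_zero] at hzpos
    simp at hzpos
  -- the key bound on ‖u‖
  have hub : ‖u‖ ^ 2 * (1 - α) ≤ α ^ 2 * ‖x‖ ^ 2 := by
    by_cases hy0 : y = 0
    · have hu0 : u = 0 := by rw [← hy, hy0, map_zero]
      rw [hu0, norm_zero]
      have h0 : (0:ℝ) ≤ α ^ 2 * ‖x‖ ^ 2 := by positivity
      linarith
    · have hyn : (0:ℝ) < ‖y‖ := norm_pos_iff.mpr hy0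
      have hxn : (0:ℝ) < ‖x‖ := norm_pos_iff.mpr hx
      set s : ℝ := ‖x‖ / ‖y‖ with hs
      have hs0 : (0:ℝ) < s := div_pos hxn hyn
      have h := hpol (el (s • y) (0 : EuclideanSpace ℝ (Fin d)))
        (el (0 : EuclideanSpace ℝ (Fin p)) x)
      have he1 : Matrix.toEuclideanLin (S * A) (el (s • y) (0 : EuclideanSpace ℝ (Fin d)))
          = s • u := by
        rw [teLin_mul_s6, hA, el_mulVec, map_zero, add_zero,
          LinearMap.map_smul (Matrix.toEuclideanLin U) s y,
          LinearMap.map_smul (Matrix.toEuclideanLin S) s (Matrix.toEuclideanLin U y),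
          ← teLin_mul_s6, hy]
      have he2 : Matrix.toEuclideanLin (S * A) (el (0 : EuclideanSpace ℝ (Fin p)) x) = w :=
        hwe.symm
      have hss : s * ‖y‖ = ‖x‖ := by
        rw [hs, div_mul_cancel₀ _ (ne_of_gt hyn)]
      have e_in : ⟪el (s • y) (0 : EuclideanSpace ℝ (Fin d)),
          el (0 : EuclideanSpace ℝ (Fin p)) x⟫_ℝ = 0 := by
        rw [el_inner, inner_zero_right, inner_zero_left]
        ring
      have e_n1 : ‖el (s • y) (0 : EuclideanSpace ℝ (Fin d))‖ ^ 2 = (s * ‖y‖) ^ 2 := by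
        rw [el_norm, norm_zero, norm_smul, Real.norm_eq_abs, abs_of_pos hs0]
        ring
      have e_n2 : ‖el (0 : EuclideanSpace ℝ (Fin p)) x‖ ^ 2 = ‖x‖ ^ 2 := by
        rw [el_norm, norm_zero]
        ring
      have e_l : ⟪(s : ℝ) • u, w⟫_ℝ = s * ‖u‖ ^ 2 := by
        rw [real_inner_smul_left, huw]
      rw [he1, he2, e_in, e_n1, e_n2, e_l, hss] at h
      have h' : s * ‖u‖ ^ 2 ≤ α * ‖x‖ ^ 2 := by linarith
      have hu2' : ‖u‖ ^ 2 ≤ α * ‖x‖ * ‖y‖ := by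
        have h1 : ‖x‖ * ‖u‖ ^ 2 ≤ ‖x‖ * (α * ‖x‖ * ‖y‖) := by
          have h2 := mul_le_mul_of_nonneg_left h' hyn.le
          rw [hs] at h2
          have h3 : ‖y‖ * (‖x‖ / ‖y‖ * ‖u‖ ^ 2) = ‖x‖ * ‖u‖ ^ 2 := by
            field_simp
          linarith [h2, h3]
        exact le_of_mul_le_mul_left h1 hxn
      by_cases hu0 : ‖u‖ = 0
      · rw [hu0]
        have h0 : (0:ℝ) ≤ α ^ 2 * ‖x‖ ^ 2 := by positivity
        linarith
      · have hupos : (0:ℝ) < ‖u‖ ^ 2 := by positivity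
        have ha : ‖u‖ ^ 2 * ‖u‖ ^ 2 ≤ (α * ‖x‖ * ‖y‖) * (α * ‖x‖ * ‖y‖) :=
          mul_le_mul hu2' hu2' (sq_nonneg _)
            (mul_nonneg (mul_nonneg hα0.le (norm_nonneg _)) (norm_nonneg _))
        have hb : α ^ 2 * ‖x‖ ^ 2 * ((1 - α) * ‖y‖ ^ 2) ≤ α ^ 2 * ‖x‖ ^ 2 * ‖u‖ ^ 2 :=
          mul_le_mul_of_nonneg_left hy2 (mul_nonneg (sq_nonneg α) (sq_nonneg ‖x‖))
        have hc : ‖u‖ ^ 2 * ‖u‖ ^ 2 * (1 - α) ≤ (α * ‖x‖ * ‖y‖) * (α * ‖x‖ * ‖y‖) * (1 - α) :=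
          mul_le_mul_of_nonneg_right ha h1a.le
        have h5 : ‖u‖ ^ 2 * (1 - α) * ‖u‖ ^ 2 ≤ α ^ 2 * ‖x‖ ^ 2 * ‖u‖ ^ 2 := by
          nlinarith [hb, hc]
        exact le_of_mul_le_mul_right h5 hupos
  -- square-root consequences
  have hnw : (0:ℝ) < ‖w‖ ^ 2 := by linarith [sq_nonneg ‖u‖]
  have hzw2 : ‖z‖ ^ 2 ≤ ‖w‖ ^ 2 := by linarith [sq_nonneg ‖u‖]
  have hzw : ‖z‖ ≤ ‖w‖ := by
    have h : ‖z‖ ^ 2 ≤ ‖w‖ ^ 2 := hzw2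
    have h2 := Real.sqrt_le_sqrt h
    rwa [Real.sqrt_sq (norm_nonneg _), Real.sqrt_sq (norm_nonneg _)] at h2
  have huwn : ‖u‖ * (1 - α) ≤ α * ‖w‖ := by
    have hsq : (‖u‖ * (1 - α)) ^ 2 ≤ (α * ‖w‖) ^ 2 := by
      have k1 : ‖u‖ ^ 2 * (1 - α) * (1 - α) ≤ α ^ 2 * ‖x‖ ^ 2 * (1 - α) :=
        mul_le_mul_of_nonneg_right hub h1a.le
      have k2 : α ^ 2 * ((1 - α) * ‖x‖ ^ 2) ≤ α ^ 2 * ‖z‖ ^ 2 :=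
        mul_le_mul_of_nonneg_left hz2' (sq_nonneg α)
      have k3 : α ^ 2 * ‖z‖ ^ 2 ≤ α ^ 2 * ‖w‖ ^ 2 :=
        mul_le_mul_of_nonneg_left hzw2 (sq_nonneg α)
      nlinarith [k1, k2, k3]
    have h2 := Real.sqrt_le_sqrt hsq
    rwa [Real.sqrt_sq (mul_nonneg (norm_nonneg _) h1a.le),
      Real.sqrt_sq (mul_nonneg hα0.le (norm_nonneg _))] at h2
  -- facts about M
  set TM := Matrix.toEuclideanLin M with hTM
  set C := opNorm M with hC
  have hC0 : (0:ℝ) ≤ C := norm_nonneg _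
  have hMs : ∀ a b : EuclideanSpace ℝ (Fin k), ⟪a, TM b⟫_ℝ = ⟪b, TM a⟫_ℝ := by
    intro a b
    rw [hTM, teLin_adj, hM]
    exact real_inner_comm _ _
  have hCM : ∀ a b : EuclideanSpace ℝ (Fin k), |⟪a, TM b⟫_ℝ| ≤ C * ‖a‖ * ‖b‖ := by
    intro a b
    exact teLin_opNorm M a b
  have ew : ⟪w, TM w⟫_ℝ = ⟪z, TM z⟫_ℝ + ⟪u, TM (w + z)⟫_ℝ := by
    rw [hwzu]
    simp only [map_add, inner_add_left, inner_add_right]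
    have h := hMs z u
    linarith
  refine ⟨hz0, ?_⟩
  rw [div_sub_div _ _ (ne_of_gt hzpos) (ne_of_gt hnw), abs_div,
    abs_of_pos (mul_pos hzpos hnw), div_le_iff₀ (mul_pos hzpos hnw)]
  have hNeq : ⟪z, TM z⟫_ℝ * ‖w‖ ^ 2 - ‖z‖ ^ 2 * ⟪w, TM w⟫_ℝ
      = ‖u‖ ^ 2 * ⟪z, TM z⟫_ℝ - ‖z‖ ^ 2 * ⟪u, TM (w + z)⟫_ℝ := by
    rw [ew, pyth]; ring
  rw [hNeq]
  have step1 : |‖u‖ ^ 2 * ⟪z, TM z⟫_ℝ - ‖z‖ ^ 2 * ⟪u, TM (w + z)⟫_ℝ|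
      ≤ ‖u‖ ^ 2 * |⟪z, TM z⟫_ℝ| + ‖z‖ ^ 2 * |⟪u, TM (w + z)⟫_ℝ| := by
    refine (abs_sub (‖u‖ ^ 2 * ⟪z, TM z⟫_ℝ) (‖z‖ ^ 2 * ⟪u, TM (w + z)⟫_ℝ)).trans ?_
    rw [abs_mul, abs_mul, abs_of_nonneg (sq_nonneg ‖u‖), abs_of_nonneg (sq_nonneg ‖z‖)]
  have c1 : |⟪z, TM z⟫_ℝ| ≤ C * ‖z‖ ^ 2 := by
    have h := hCM z z
    linarith [h]
  have c2 : |⟪u, TM (w + z)⟫_ℝ| ≤ C * (2 * ‖u‖ * ‖w‖) := by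
    have h := hCM u (w + z)
    have h2 : ‖w + z‖ ≤ ‖w‖ + ‖z‖ := norm_add_le _ _
    have h3 : C * ‖u‖ * ‖w + z‖ ≤ C * ‖u‖ * (‖w‖ + ‖z‖) :=
      mul_le_mul_of_nonneg_left h2 (mul_nonneg hC0 (norm_nonneg u))
    have h4 : C * ‖u‖ * ‖z‖ ≤ C * ‖u‖ * ‖w‖ :=
      mul_le_mul_of_nonneg_left hzw (mul_nonneg hC0 (norm_nonneg u))
    linarith [h, h3, h4]
  have d1 : ‖u‖ ^ 2 ≤ 1 / 5 * α * ‖w‖ ^ 2 := by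
    have k1 : ‖u‖ ^ 2 * (1 - α) * (1 - α) ≤ α ^ 2 * ‖x‖ ^ 2 * (1 - α) :=
      mul_le_mul_of_nonneg_right hub h1a.le
    have k2 : α ^ 2 * ((1 - α) * ‖x‖ ^ 2) ≤ α ^ 2 * ‖z‖ ^ 2 :=
      mul_le_mul_of_nonneg_left hz2' (sq_nonneg α)
    have k3 : α ^ 2 * ‖z‖ ^ 2 ≤ α ^ 2 * ‖w‖ ^ 2 :=
      mul_le_mul_of_nonneg_left hzw2 (sq_nonneg α)
    have k4 : α * (α * ‖w‖ ^ 2) ≤ 1 / 7 * (α * ‖w‖ ^ 2) :=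
      mul_le_mul_of_nonneg_right hα (mul_nonneg hα0.le (sq_nonneg ‖w‖))
    have k5 : α * ‖u‖ ^ 2 ≤ 1 / 7 * ‖u‖ ^ 2 :=
      mul_le_mul_of_nonneg_right hα (sq_nonneg ‖u‖)
    have k6 : (0:ℝ) ≤ α ^ 2 * ‖u‖ ^ 2 := mul_nonneg (sq_nonneg α) (sq_nonneg ‖u‖)
    nlinarith [k1, k2, k3, k4, k5, k6]
  have d2 : 2 * ‖u‖ * ‖w‖ ≤ 14 / 5 * α * ‖w‖ ^ 2 := by
    have k1 : ‖u‖ * (1 - α) * ‖w‖ ≤ α * ‖w‖ * ‖w‖ :=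
      mul_le_mul_of_nonneg_right huwn (norm_nonneg _)
    have k2 : (0:ℝ) ≤ ‖u‖ * ‖w‖ := mul_nonneg (norm_nonneg _) (norm_nonneg _)
    have k3 : α * (‖u‖ * ‖w‖) ≤ 1 / 7 * (‖u‖ * ‖w‖) :=
      mul_le_mul_of_nonneg_right hα k2
    have k4 : (0:ℝ) ≤ α * ‖w‖ ^ 2 := mul_nonneg hα0.le (sq_nonneg ‖w‖)
    nlinarith [k1, k2, k3, k4]
  have d3 : ‖u‖ ^ 2 + 2 * ‖u‖ * ‖w‖ ≤ 10 * α * ‖w‖ ^ 2 := by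
    linarith [d1, d2, mul_nonneg hα0.le (sq_nonneg ‖w‖)]
  have t1 : ‖u‖ ^ 2 * |⟪z, TM z⟫_ℝ| ≤ ‖u‖ ^ 2 * (C * ‖z‖ ^ 2) :=
    mul_le_mul_of_nonneg_left c1 (sq_nonneg _)
  have t2 : ‖z‖ ^ 2 * |⟪u, TM (w + z)⟫_ℝ| ≤ ‖z‖ ^ 2 * (C * (2 * ‖u‖ * ‖w‖)) :=
    mul_le_mul_of_nonneg_left c2 (sq_nonneg _)
  have t3 : C * ‖z‖ ^ 2 * (‖u‖ ^ 2 + 2 * ‖u‖ * ‖w‖) ≤ C * ‖z‖ ^ 2 * (10 * α * ‖w‖ ^ 2) :=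
    mul_le_mul_of_nonneg_left d3 (mul_nonneg hC0 (sq_nonneg _))
  calc |‖u‖ ^ 2 * ⟪z, TM z⟫_ℝ - ‖z‖ ^ 2 * ⟪u, TM (w + z)⟫_ℝ|
      ≤ ‖u‖ ^ 2 * |⟪z, TM z⟫_ℝ| + ‖z‖ ^ 2 * |⟪u, TM (w + z)⟫_ℝ| := step1
    _ ≤ C * ‖z‖ ^ 2 * (‖u‖ ^ 2 + 2 * ‖u‖ * ‖w‖) := by linarith [t1, t2]
    _ ≤ C * ‖z‖ ^ 2 * (10 * α * ‖w‖ ^ 2) := t3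
    _ = 10 * α * C * (‖z‖ ^ 2 * ‖w‖ ^ 2) := by ring
end

section
/- Let A ∈ ℝ^{n×n} be symmetric positive semidefinite with every entry of magnitude at most 1, and let v be a unit eigenvector of A with associated eigenvalue λ > 0. Then every coordinate of v satisfies |v_i| ≤ 1/√λ. -/
open Matrix

/-- coordinates of a unit eigenvector of a bounded entry PSD matrix with
eigenvalue `λ > 0` are bounded by `1/√λ`. -/
theorem stmt15 {n : ℕ} (A : Matrix (Fin n) (Fin n) ℝ) (hA : A.PosSemidef)
    (hbdd : ∀ i j, |A i j| ≤ 1) (v : Fin n → ℝ) (lam : ℝ) (hlam : 0 < lam)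
    (hv : A.mulVec v = lam • v) (hunit : ∑ i, v i ^ 2 = 1) :
    ∀ i, |v i| ≤ 1 / Real.sqrt lam := by
  intro i
  have hsym : ∀ j, A i j = A j i := by
    intro j
    have := hA.1
    rw [Matrix.IsHermitian] at this
    conv_lhs => rw [← this]
    simp [Matrix.conjTranspose_apply]
  -- key inequality
  set x : Fin n → ℝ := Pi.single i 1 - v i • v with hx
  have hpsd : 0 ≤ star x ⬝ᵥ A.mulVec x := hA.dotProduct_mulVec_nonneg x
  have h1 : A.mulVec (Pi.single i (1:ℝ)) = fun j => A j i := by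
    ext j
    simp [Matrix.mulVec_single]
  have hAvi : A.mulVec v i = lam * v i := by rw [hv]; simp
  have hexp : star x ⬝ᵥ A.mulVec x = A i i - lam * (v i)^2 := by
    have hvAv : v ⬝ᵥ A.mulVec v = lam := by
      rw [hv, dotProduct_smul, smul_eq_mul]
      have hd : v ⬝ᵥ v = 1 := by simpa [dotProduct, ← sq] using hunit
      rw [hd, mul_one]
    have hsAv : Pi.single i (1:ℝ) ⬝ᵥ A.mulVec v = lam * v i := by
      rw [single_dotProduct]
      simp [hAvi]
    have hvAs : v ⬝ᵥ A.mulVec (Pi.single i 1) = lam * v i := by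
      rw [h1]
      simp [dotProduct]
      rw [show ∑ j, v j * A j i = ∑ j, A i j * v j from by
        apply Finset.sum_congr rfl; intro j _; rw [hsym j, mul_comm]]
      exact hAvi
    have hsAs : Pi.single i (1:ℝ) ⬝ᵥ A.mulVec (Pi.single i 1) = A i i := by
      rw [h1, single_dotProduct]; simp
    simp only [hx, star_trivial, Matrix.mulVec_sub, Matrix.mulVec_smul,
      dotProduct_sub, sub_dotProduct, smul_dotProduct,
      dotProduct_smul, hsAv, hvAs, hvAv, hsAs, smul_eq_mul]
    ring
  have hkey : lam * (v i)^2 ≤ 1 := by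
    have := (hbdd i i)
    have hAii : A i i ≤ 1 := le_trans (le_abs_self _) this
    rw [hexp] at hpsd
    linarith
  -- conclude
  have hsq : (v i)^2 ≤ 1 / lam := by
    rw [le_div_iff₀ hlam]; linarith [hkey]
  have h := Real.sqrt_le_sqrt hsq
  rw [Real.sqrt_sq_eq_abs] at h
  calc |v i| ≤ Real.sqrt (1/lam) := h
    _ = 1 / Real.sqrt lam := by
      rw [one_div, Real.sqrt_inv, one_div]
end
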